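/- Let z be a nonzero real number, let a be a real number that is not a nonpositive integer, and let d ≥ 1 be an integer. Let c(d) be the d-th iterated derivative at 0 of g_{a,z}(x) = exp(1/z − a·x − (1/z)·e^{−x}). Then there exists a polynomial q with real coefficients such that for every integer n ≥ 0, ∑_{k=0}^{n−1} (k^d − c(d))·z^k·a^{(k)} = q(n)·z^n·a^{(n)} − q(0). -/

import Mathlib

/-- Rising factorial `a^{(k)} = a (a+1) ⋯ (a+k-1)` of a real number. -/
def risingFactorial (a : ℝ) : ℕ → ℝ
  | 0 => 1
  | k + 1 => risingFactorial a k * (a + k)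

/-!
Put `T q = z (X + a) q(X + 1) - q`. The terms `(T q)(k) z^k a^{(k)}` telescope, so it suffices to
find `q` with `T q = X^d - c(d)`. Let `L p = (p(D) g)(0)`, so that `L (X^m) = g^{(m)}(0)` and
`L 1 = 1`. The differential equation `z (g' + a g) = e^{-x} g` and the exponential shift give
`L ∘ T = 0`. On the shifted Pochhammer basis `R_m = (X + a)(X + a + 1) ⋯ (X + a + m - 1)` the
operator acts as `T R_m = z R_{m+1} - R_m`, so by induction every `R_m - L R_m` lies in the range
of `T`, and then by linearity so does `p - L p` for every polynomial `p`.
-/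

open Polynomial Real
open scoped ContDiff

namespace RisingFactorialSum

section Field

variable {K : Type*} [Field K]

noncomputable def telescopeOp (z a : K) : K[X] →ₗ[K] K[X] where
  toFun q := C z * (X + C a) * q.comp (X + 1) - q
  map_add' p q := by simp only [add_comp]; ring
  map_smul' r q := by simp only [smul_eq_C_mul, mul_comp, C_comp, RingHom.id_apply]; ring

theorem telescopeOp_apply (z a : K) (q : K[X]) :
    telescopeOp z a q = C z * (X + C a) * q.comp (X + 1) - q := rfl

noncomputable def shiftedPochhammer (a : K) (m : ℕ) : K[X] :=
  (ascPochhammer K m).comp (X + C a)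

theorem shiftedPochhammer_zero (a : K) : shiftedPochhammer a 0 = 1 := by
  simp [shiftedPochhammer]

theorem shiftedPochhammer_succ (a : K) (m : ℕ) :
    shiftedPochhammer a (m + 1) = (X + C a) * (shiftedPochhammer a m).comp (X + 1) := by
  simp only [shiftedPochhammer, ascPochhammer_succ_left, mul_comp, X_comp, comp_assoc, add_comp,
    one_comp, C_comp]
  ring_nf

theorem monic_shiftedPochhammer (a : K) (m : ℕ) : (shiftedPochhammer a m).Monic :=
  (monic_ascPochhammer K m).comp_X_add_C a

theorem degree_shiftedPochhammer (a : K) (m : ℕ) : (shiftedPochhammer a m).degree = m := by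
  rw [degree_eq_natDegree (monic_shiftedPochhammer a m).ne_zero, shiftedPochhammer,
    natDegree_comp, ascPochhammer_natDegree, natDegree_X_add_C, mul_one]

theorem span_range_shiftedPochhammer (a : K) :
    Submodule.span K (Set.range (shiftedPochhammer a)) = ⊤ :=
  Sequence.span ⟨shiftedPochhammer a, degree_shiftedPochhammer a⟩ fun m => by
    exact (monic_shiftedPochhammer a m).leadingCoeff ▸ isUnit_one

theorem exists_telescopeOp_eq_sub_C {z a : K} (hz : z ≠ 0) (L : K[X] →ₗ[K] K) (hL : L 1 = 1)
    (hLT : ∀ q, L (telescopeOp z a q) = 0) (p : K[X]) :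
    ∃ q, telescopeOp z a q = p - C (L p) := by
  let S : Submodule K K[X] :=
    (LinearMap.range (telescopeOp z a)).comap (LinearMap.id - monomial 0 ∘ₗ L)
  have hTS : ∀ q, telescopeOp z a q ∈ S := fun q => ⟨q, by simp [hLT]⟩
  have hRS : ∀ m, shiftedPochhammer a m ∈ S := by
    intro m
    induction m with
    | zero => exact ⟨0, by simp [shiftedPochhammer_zero, hL]⟩
    | succ m ih =>
      have hR : shiftedPochhammer a (m + 1) =
          z⁻¹ • (telescopeOp z a (shiftedPochhammer a m) + shiftedPochhammer a m) := by
        rw [telescopeOp_apply, shiftedPochhammer_succ, smul_eq_C_mul, sub_add_cancel, ← mul_assoc,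
          ← mul_assoc, ← C_mul, inv_mul_cancel₀ hz, C_1, one_mul]
      rw [hR]
      exact S.smul_mem _ (S.add_mem (hTS _) ih)
  have hp : p ∈ S := Submodule.span_le.mpr (Set.range_subset_iff.mpr hRS)
    (span_range_shiftedPochhammer a ▸ Submodule.mem_top)
  obtain ⟨q, hq⟩ := hp
  exact ⟨q, by simpa using hq⟩

end Field

/-- `diffOpAt f x p` is `(p(d/dx) f)(x)`. -/
noncomputable def diffOpAt (f : ℝ → ℝ) (x : ℝ) : ℝ[X] →ₗ[ℝ] ℝ :=
  lsum fun m => iteratedDeriv m f x • LinearMap.id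

theorem diffOpAt_monomial (f : ℝ → ℝ) (x : ℝ) (n : ℕ) (r : ℝ) :
    diffOpAt f x (monomial n r) = iteratedDeriv n f x * r := by
  simp [diffOpAt, sum_monomial_index]

theorem diffOpAt_X_pow (f : ℝ → ℝ) (x : ℝ) (n : ℕ) :
    diffOpAt f x (X ^ n) = iteratedDeriv n f x := by
  rw [← monomial_one_right_eq_X_pow, diffOpAt_monomial, mul_one]

theorem diffOpAt_one (f : ℝ → ℝ) (x : ℝ) : diffOpAt f x 1 = f x := by
  simpa using diffOpAt_X_pow f x 0

theorem diffOpAt_div_const (f : ℝ → ℝ) (x c : ℝ) (p : ℝ[X]) :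
    diffOpAt (fun y => f y / c) x p = diffOpAt f x p / c := by
  have : diffOpAt (fun y => f y / c) x = c⁻¹ • diffOpAt f x := by
    ext n
    simp [diffOpAt_monomial, div_eq_inv_mul]
  rw [this, LinearMap.smul_apply, smul_eq_mul, inv_mul_eq_div]

theorem diffOpAt_X_add_C_mul {f : ℝ → ℝ} (hf : ContDiff ℝ ∞ f) (x a : ℝ) (p : ℝ[X]) :
    diffOpAt f x ((X + C a) * p) = diffOpAt (fun y => deriv f y + a * f y) x p := by
  have : diffOpAt f x ∘ₗ LinearMap.mulLeft ℝ (X + C a) =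
      diffOpAt (fun y => deriv f y + a * f y) x := by
    ext n
    have hdf : ContDiff ℝ ∞ (deriv f) := hf.deriv'
    simp only [LinearMap.comp_apply, LinearMap.mulLeft_apply, monomial_one_right_eq_X_pow]
    rw [add_mul, ← pow_succ', ← smul_eq_C_mul, map_add, map_smul, diffOpAt_X_pow, diffOpAt_X_pow,
      diffOpAt_X_pow, iteratedDeriv_fun_add (hdf.contDiffAt.of_le (mod_cast le_top))
      (contDiffAt_const.mul (hf.contDiffAt.of_le (mod_cast le_top))),
      iteratedDeriv_const_mul_field, ← iteratedDeriv_succ', smul_eq_mul]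
  exact LinearMap.congr_fun this p

/-- The exponential shift `p(D + 1) u = e^{-x} p(D) (e^x u)`, evaluated at `0`. -/
theorem diffOpAt_comp_X_add_one {u : ℝ → ℝ} (hu : ContDiff ℝ ∞ u) (p : ℝ[X]) :
    diffOpAt u 0 (p.comp (X + 1)) = diffOpAt (fun y => u y * exp y) 0 p := by
  have : diffOpAt u 0 ∘ₗ (aeval (X + 1 : ℝ[X])).toLinearMap =
      diffOpAt (fun y => u y * exp y) 0 := by
    ext n
    simp only [LinearMap.comp_apply, AlgHom.toLinearMap_apply, monomial_one_right_eq_X_pow,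
      map_pow, aeval_X, diffOpAt_X_pow, add_pow, one_pow, mul_one, map_sum]
    rw [iteratedDeriv_fun_mul (hu.contDiffAt.of_le (mod_cast le_top))
      (contDiff_exp.contDiffAt.of_le (mod_cast le_top))]
    refine Finset.sum_congr rfl fun i _ => ?_
    rw [← C_eq_natCast, mul_comm, ← smul_eq_C_mul, map_smul, diffOpAt_X_pow,
      iteratedDeriv_eq_iterate (f := exp), iter_deriv_exp, exp_zero, mul_one, smul_eq_mul]
  exact LinearMap.congr_fun this p

noncomputable def g (a z : ℝ) (x : ℝ) : ℝ := exp (1 / z - a * x - 1 / z * exp (-x))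

theorem contDiff_g (a z : ℝ) : ContDiff ℝ ∞ (g a z) := by
  unfold g; fun_prop

theorem hasDerivAt_g (a z x : ℝ) : HasDerivAt (g a z) ((exp (-x) / z - a) * g a z x) x := by
  have hexp : HasDerivAt (fun y => exp (-y)) (-exp (-x)) x := by
    simpa using (hasDerivAt_neg x).exp
  have hinner : HasDerivAt (fun y => 1 / z - a * y - 1 / z * exp (-y)) (exp (-x) / z - a) x := by
    refine ((((hasDerivAt_id' x).const_mul a).const_sub (1 / z)).sub
      (hexp.const_mul (1 / z))).congr_deriv ?_
    ring
  exact hinner.exp.congr_deriv (mul_comm _ _)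

theorem deriv_g_add_mul_mul_exp (a z x : ℝ) :
    (deriv (g a z) x + a * g a z x) * exp x = g a z x / z := by
  rw [(hasDerivAt_g a z x).deriv, div_eq_mul_inv, div_eq_mul_inv]
  have hexp : exp (-x) * exp x = 1 := by rw [← exp_add, neg_add_cancel, exp_zero]
  linear_combination g a z x * z⁻¹ * hexp

theorem diffOpAt_g_telescopeOp {a z : ℝ} (hz : z ≠ 0) (q : ℝ[X]) :
    diffOpAt (g a z) 0 (telescopeOp z a q) = 0 := by
  have hu : ContDiff ℝ ∞ fun y => deriv (g a z) y + a * g a z y :=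
    (contDiff_g a z).deriv'.add (contDiff_const.mul (contDiff_g a z))
  rw [telescopeOp_apply, map_sub, mul_assoc, ← smul_eq_C_mul, map_smul, diffOpAt_X_add_C_mul
    (contDiff_g a z), diffOpAt_comp_X_add_one hu, funext (deriv_g_add_mul_mul_exp a z),
    diffOpAt_div_const, smul_eq_mul, mul_div_cancel₀ _ hz, sub_self]

theorem sum_eval_telescopeOp_mul_risingFactorial (z a : ℝ) (q : ℝ[X]) (n : ℕ) :
    ∑ k ∈ Finset.range n, (telescopeOp z a q).eval (k : ℝ) * z ^ k * risingFactorial a k =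
      q.eval (n : ℝ) * z ^ n * risingFactorial a n - q.eval 0 := by
  have hstep : ∀ k : ℕ, (telescopeOp z a q).eval (k : ℝ) * z ^ k * risingFactorial a k =
      q.eval ((k + 1 : ℕ) : ℝ) * z ^ (k + 1) * risingFactorial a (k + 1) -
        q.eval (k : ℝ) * z ^ k * risingFactorial a k := by
    intro k
    simp only [telescopeOp_apply, eval_sub, eval_mul, eval_C, eval_add, eval_X, eval_comp,
      eval_one, risingFactorial, Nat.cast_succ]
    ring
  simp_rw [hstep]
  rw [Finset.sum_range_sub (fun k => q.eval (k : ℝ) * z ^ k * risingFactorial a k)]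
  simp [risingFactorial]

end RisingFactorialSum

open RisingFactorialSum

theorem stmt_12_general (z a : ℝ) (hz : z ≠ 0) (d : ℕ) :
    ∃ q : Polynomial ℝ, ∀ n : ℕ,
      ∑ k ∈ Finset.range n,
          (((k : ℝ) ^ d -
              iteratedDeriv d
                (fun x : ℝ => Real.exp (1 / z - a * x - (1 / z) * Real.exp (-x))) 0) *
            z ^ k * risingFactorial a k) =
        q.eval (n : ℝ) * z ^ n * risingFactorial a n - q.eval 0 := by
  have hL : diffOpAt (g a z) 0 1 = 1 := by simp [diffOpAt_one, g]
  obtain ⟨q, hq⟩ := exists_telescopeOp_eq_sub_C hz (diffOpAt (g a z) 0) hL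
    (diffOpAt_g_telescopeOp hz) (X ^ d)
  refine ⟨q, fun n => ?_⟩
  rw [← sum_eval_telescopeOp_mul_risingFactorial, hq, diffOpAt_X_pow]
  simp only [eval_sub, eval_pow, eval_X, eval_C]
  rfl

theorem stmt_12 (z a : ℝ) (hz : z ≠ 0) (ha : ∀ m : ℕ, a ≠ -(m : ℝ)) (d : ℕ) (hd : 1 ≤ d) :
    ∃ q : Polynomial ℝ, ∀ n : ℕ,
      ∑ k ∈ Finset.range n,
          (((k : ℝ) ^ d -
              iteratedDeriv d
                (fun x : ℝ => Real.exp (1 / z - a * x - (1 / z) * Real.exp (-x))) 0) *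
            z ^ k * risingFactorial a k) =
        q.eval (n : ℝ) * z ^ n * risingFactorial a n - q.eval 0 :=
  stmt_12_general z a hz d
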